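/- A vector ρ ∈ ℝ^N satisfies Σ_{x ∈ D} ρ(D,x) = 0 for every nonempty D ⊆ X if and only if Kρ is a flow on the Boolean lattice graph with total flow 0. Consequently, the image of KB equals the space of all flows with total flow 0. -/

import Mathlib

/-!
Write `S ρ E = ∑ x ∈ E, ρ E x` and let `K` also denote the scalar upward Möbius transform
`(K f) D = ∑_{E ⊇ D} (-1)^|E \ D| f E`. Regrouping the alternating sums by `E` gives the
divergence identity
  `∑ x ∈ D, (K ρ) D x - ∑ y ∉ D, (K ρ) (D ∪ {y}) y = K (S ρ) D`,
whose left side at `D = X` is the total flow. Hence `K ρ` is a flow with total flow `0` iff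
`K (S ρ)` vanishes on nonempty sets; as `K` is inverted by summation over supersets and both are
triangular for `⊆`, this holds iff `S ρ` vanishes on nonempty sets. For the image of `K B`:
every `κ` is `K ρ` for `ρ D = ∑_{F ⊇ D} κ F`, the map `B` fixes the coordinates `x ∈ D` of any
vector whose sum over each nonempty `D` vanishes, and `B ξ` always has this property.
-/

open Finset

/-- Möbius operator. -/
noncomputable def Kop (n : ℕ) (ρ : Finset (Fin n) → Fin n → ℝ)
    (D : Finset (Fin n)) (x : Fin n) : ℝ :=
  ∑ E ∈ univ.filter (fun E => D ⊆ E), (-1 : ℝ) ^ (E \ D).card * ρ E x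

/-- The reduced-coordinate embedding `B`. -/
noncomputable def Bop (n : ℕ) (ξ : Finset (Fin n) → Fin n → ℝ)
    (D : Finset (Fin n)) (x : Fin n) : ℝ :=
  if h : D.Nonempty then
    if x = D.max' h then -∑ y ∈ D.erase (D.max' h), ξ D y else ξ D x
  else 0

/-- Flow conservation on the Boolean lattice graph. -/
def IsFlow (n : ℕ) (κ : Finset (Fin n) → Fin n → ℝ) : Prop :=
  ∀ D : Finset (Fin n), D ≠ ∅ → D ≠ univ →
    ∑ x ∈ D, κ D x = ∑ y ∈ Dᶜ, κ (insert y D) y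

namespace Finset

variable {α R : Type*} [DecidableEq α] [CommRing R] {D E F : Finset α}

theorem sum_Icc_neg_one_pow_card_sdiff_left (h : D ⊆ F) :
    ∑ E ∈ Icc D F, (-1 : R) ^ #(E \ D) = if D = F then 1 else 0 := by
  have hinj : Set.InjOn (D ∪ ·) (F \ D).powerset := fun s hs t ht hst => by
    have hs' := disjoint_sdiff.mono_right (mem_powerset.1 hs)
    have ht' := disjoint_sdiff.mono_right (mem_powerset.1 ht)
    simpa [union_sdiff_cancel_left hs', union_sdiff_cancel_left ht'] using
      congrArg (· \ D) hst
  have hcard : ∀ t ∈ (F \ D).powerset, (-1 : R) ^ #((D ∪ t) \ D) = (-1 : R) ^ #t :=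
    fun t ht => by
      rw [union_sdiff_cancel_left (disjoint_sdiff.mono_right (mem_powerset.1 ht))]
  have hsum := congrArg (Int.cast : ℤ → R) (sum_powerset_neg_one_pow_card (x := F \ D))
  push_cast at hsum
  have hFD : F \ D = ∅ ↔ D = F := by
    rw [sdiff_eq_empty_iff_subset]
    exact ⟨subset_antisymm h, fun hDF => hDF ▸ subset_rfl⟩
  rw [Icc_eq_image_powerset h, sum_image hinj, sum_congr rfl hcard, hsum]
  exact if_congr hFD rfl rfl

theorem card_sdiff_add_card_sdiff (hDE : D ⊆ E) (hEF : E ⊆ F) :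
    #(F \ E) + #(E \ D) = #(F \ D) := by
  rw [card_sdiff_of_subset hEF, card_sdiff_of_subset hDE,
    card_sdiff_of_subset (hDE.trans hEF)]
  have := card_le_card hDE
  have := card_le_card hEF
  omega

theorem sum_Icc_neg_one_pow_card_sdiff_right (h : D ⊆ F) :
    ∑ E ∈ Icc D F, (-1 : R) ^ #(F \ E) = if D = F then 1 else 0 := by
  have hsign : ∀ E ∈ Icc D F, (-1 : R) ^ #(F \ E) = (-1) ^ #(F \ D) * (-1) ^ #(E \ D) :=
    fun E hE => by
      obtain ⟨hDE, hEF⟩ := mem_Icc.1 hE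
      rw [← card_sdiff_add_card_sdiff hDE hEF, pow_add, mul_assoc, ← pow_add,
        ← two_mul, pow_mul, neg_one_sq, one_pow, mul_one]
  rw [sum_congr rfl hsign, ← mul_sum, sum_Icc_neg_one_pow_card_sdiff_left h]
  split_ifs with hDF <;> simp [hDF]

end Finset

section UpperMobius

variable {α R : Type*} [Fintype α] [DecidableEq α] [CommRing R]

noncomputable def upperMobius (f : Finset α → R) (D : Finset α) : R :=
  ∑ E ∈ univ.filter (fun E => D ⊆ E), (-1 : R) ^ #(E \ D) * f E

theorem sum_supersets_sum_supersets {M : Type*} [AddCommMonoid M]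
    (φ : Finset α → Finset α → M) (D : Finset α) :
    ∑ E ∈ univ.filter (fun E => D ⊆ E), ∑ F ∈ univ.filter (fun F => E ⊆ F), φ E F
      = ∑ F ∈ univ.filter (fun F => D ⊆ F), ∑ E ∈ Icc D F, φ E F :=
  sum_comm' fun E F => by
    simp only [mem_filter, mem_univ, true_and, mem_Icc]
    exact ⟨fun ⟨hDE, hEF⟩ => ⟨⟨hDE, hEF⟩, hDE.trans hEF⟩, fun ⟨h, _⟩ => h⟩

theorem sum_supersets_upperMobius (f : Finset α → R) (D : Finset α) :
    ∑ E ∈ univ.filter (fun E => D ⊆ E), upperMobius f E = f D := by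
  simp only [upperMobius, sum_supersets_sum_supersets (fun E F => (-1 : R) ^ #(F \ E) * f F),
    ← sum_mul]
  rw [sum_congr rfl fun F hF =>
    by rw [sum_Icc_neg_one_pow_card_sdiff_right (mem_filter.1 hF).2]]
  simp

theorem upperMobius_sum_supersets (g : Finset α → R) (D : Finset α) :
    upperMobius (fun E => ∑ F ∈ univ.filter (fun F => E ⊆ F), g F) D = g D := by
  simp only [upperMobius, mul_sum,
    sum_supersets_sum_supersets (fun E F => (-1 : R) ^ #(E \ D) * g F), ← sum_mul]
  rw [sum_congr rfl fun F hF =>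
    by rw [sum_Icc_neg_one_pow_card_sdiff_left (mem_filter.1 hF).2]]
  simp

theorem upperMobius_eq_zero_iff_of_isUpperSet {s : Set (Finset α)} (hs : IsUpperSet s)
    (f : Finset α → R) : (∀ D ∈ s, upperMobius f D = 0) ↔ ∀ D ∈ s, f D = 0 := by
  have vanish : ∀ g : Finset α → R, (∀ E ∈ s, g E = 0) →
      ∀ D ∈ s, ∑ E ∈ univ.filter (fun E => D ⊆ E), g E = 0 :=
    fun g hg D hD => sum_eq_zero fun E hE => hg E (hs (mem_filter.1 hE).2 hD)
  constructor
  · intro h D hD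
    rw [← sum_supersets_upperMobius f D]
    exact vanish _ h D hD
  · intro h D hD
    rw [upperMobius]
    exact vanish (fun E => (-1 : R) ^ #(E \ D) * f E)
      (fun E hE => by rw [h E hE, mul_zero]) D hD

theorem sum_upperMobius_eq_sum_compl_upperMobius_insert_add (ρ : Finset α → α → R)
    (D : Finset α) :
    ∑ x ∈ D, upperMobius (ρ · x) D
      = ∑ y ∈ Dᶜ, upperMobius (ρ · y) (insert y D)
        + upperMobius (fun E => ∑ x ∈ E, ρ E x) D := by
  have hinner : ∑ x ∈ D, upperMobius (ρ · x) D
      = ∑ E ∈ univ.filter (fun E => D ⊆ E), (-1 : R) ^ #(E \ D) * ∑ x ∈ D, ρ E x := by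
    simp only [upperMobius, mul_sum]
    exact sum_comm
  have houter : ∑ y ∈ Dᶜ, upperMobius (ρ · y) (insert y D)
      = ∑ E ∈ univ.filter (fun E => D ⊆ E), -(-1 : R) ^ #(E \ D) * ∑ y ∈ E \ D, ρ E y := by
    simp only [upperMobius, mul_sum]
    rw [sum_comm' (t' := univ.filter (fun E => D ⊆ E)) (s' := (· \ D)) fun y E => by
      simp only [mem_filter, mem_univ, true_and, mem_compl, mem_sdiff, insert_subset_iff]
      tauto]
    refine sum_congr rfl fun E _ => sum_congr rfl fun y hy => ?_
    rw [sdiff_insert, ← card_erase_add_one hy, pow_succ]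
    ring
  rw [hinner, houter, upperMobius, ← sum_add_distrib]
  refine sum_congr rfl fun E hE => ?_
  rw [← sum_sdiff (mem_filter.1 hE).2]
  ring

end UpperMobius

section BooleanLatticeFlow

variable {n : ℕ}

theorem kop_eq_upperMobius (ρ : Finset (Fin n) → Fin n → ℝ) (D : Finset (Fin n)) (x : Fin n) :
    Kop n ρ D x = upperMobius (ρ · x) D :=
  rfl

theorem isFlow_kop_and_total_iff (ρ : Finset (Fin n) → Fin n → ℝ) :
    IsFlow n (Kop n ρ) ∧ ∑ x : Fin n, Kop n ρ univ x = 0 ↔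
      ∀ D : Finset (Fin n), D.Nonempty → upperMobius (fun E => ∑ x ∈ E, ρ E x) D = 0 := by
  have hdiv := sum_upperMobius_eq_sum_compl_upperMobius_insert_add ρ
  simp only [← kop_eq_upperMobius] at hdiv
  have htotal := hdiv univ
  rw [compl_univ, sum_empty, zero_add] at htotal
  constructor
  · rintro ⟨hflow, htot⟩ D hD
    by_cases hDu : D = univ
    · rw [hDu, ← htotal, htot]
    · have := hdiv D
      rw [hflow D hD.ne_empty hDu] at this
      linarith
  · intro h
    refine ⟨fun D hD _ => by rw [hdiv D, h D (nonempty_iff_ne_empty.2 hD), add_zero], ?_⟩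
    rcases (univ : Finset (Fin n)).eq_empty_or_nonempty with hempty | hne
    · rw [hempty, sum_empty]
    · rw [htotal, h univ hne]

theorem sum_eq_zero_iff_isFlow_kop (ρ : Finset (Fin n) → Fin n → ℝ) :
    (∀ D : Finset (Fin n), D.Nonempty → ∑ x ∈ D, ρ D x = 0) ↔
      IsFlow n (Kop n ρ) ∧ ∑ x : Fin n, Kop n ρ univ x = 0 := by
  rw [isFlow_kop_and_total_iff]
  exact (upperMobius_eq_zero_iff_of_isUpperSet (s := {D | D.Nonempty})
    (fun _ _ hDE hD => hD.mono hDE) _).symm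

theorem kop_congr {ρ ρ' : Finset (Fin n) → Fin n → ℝ} {D : Finset (Fin n)} {x : Fin n}
    (h : ∀ E, x ∈ E → ρ E x = ρ' E x) (hx : x ∈ D) : Kop n ρ D x = Kop n ρ' D x :=
  sum_congr rfl fun E hE => by rw [h E ((mem_filter.1 hE).2 hx)]

theorem isFlow_and_total_congr {κ κ' : Finset (Fin n) → Fin n → ℝ}
    (h : ∀ D : Finset (Fin n), ∀ x ∈ D, κ D x = κ' D x) :
    IsFlow n κ ∧ ∑ x : Fin n, κ univ x = 0 ↔ IsFlow n κ' ∧ ∑ x : Fin n, κ' univ x = 0 := by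
  have hout : ∀ D : Finset (Fin n), ∑ x ∈ D, κ D x = ∑ x ∈ D, κ' D x :=
    fun D => sum_congr rfl (h D)
  have hin : ∀ D : Finset (Fin n), ∑ y ∈ Dᶜ, κ (insert y D) y = ∑ y ∈ Dᶜ, κ' (insert y D) y :=
    fun D => sum_congr rfl fun y _ => h _ y (mem_insert_self y D)
  simp only [IsFlow, hout, hin]

theorem sum_bop_eq_zero (ξ : Finset (Fin n) → Fin n → ℝ) {D : Finset (Fin n)}
    (hD : D.Nonempty) : ∑ x ∈ D, Bop n ξ D x = 0 := by
  have herase : ∀ x ∈ D.erase (D.max' hD), Bop n ξ D x = ξ D x := fun x hx => by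
    rw [Bop, dif_pos hD, if_neg (ne_of_mem_erase hx)]
  rw [← sum_erase_add D _ (D.max'_mem hD), sum_congr rfl herase, Bop, dif_pos hD, if_pos rfl,
    add_neg_cancel]

theorem bop_eq_of_sum_eq_zero {ξ : Finset (Fin n) → Fin n → ℝ} {D : Finset (Fin n)} {x : Fin n}
    (h : ∑ y ∈ D, ξ D y = 0) (hx : x ∈ D) : Bop n ξ D x = ξ D x := by
  rw [Bop, dif_pos ⟨x, hx⟩]
  split_ifs with hmax
  · rw [← sum_erase_add D _ (D.max'_mem ⟨x, hx⟩)] at h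
    linarith [congrArg (ξ D) hmax]
  · rfl

theorem isFlow_and_total_iff_exists_kop_bop (κ : Finset (Fin n) → Fin n → ℝ) :
    IsFlow n κ ∧ ∑ x : Fin n, κ univ x = 0 ↔
      ∃ ξ : Finset (Fin n) → Fin n → ℝ,
        ∀ D : Finset (Fin n), ∀ x ∈ D, Kop n (Bop n ξ) D x = κ D x := by
  constructor
  · intro hκ
    let ρ : Finset (Fin n) → Fin n → ℝ := fun D x => ∑ F ∈ univ.filter (fun F => D ⊆ F), κ F x
    have hKρ : Kop n ρ = κ := funext₂ fun D x => upperMobius_sum_supersets (κ · x) D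
    have hρ := (sum_eq_zero_iff_isFlow_kop ρ).2 (hKρ ▸ hκ)
    refine ⟨ρ, fun D x hx => ?_⟩
    rw [kop_congr (fun E hxE => bop_eq_of_sum_eq_zero (hρ E ⟨x, hxE⟩) hxE) hx, hKρ]
  · rintro ⟨ξ, hξ⟩
    exact (isFlow_and_total_congr hξ).1
      ((sum_eq_zero_iff_isFlow_kop _).1 fun D hD => sum_bop_eq_zero ξ hD)

end BooleanLatticeFlow

theorem sum_zero_iff_flow_zero_and_image_KB_general (n : ℕ) :
    (∀ ρ : Finset (Fin n) → Fin n → ℝ,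
      (∀ D : Finset (Fin n), D.Nonempty → ∑ x ∈ D, ρ D x = 0) ↔
        (IsFlow n (Kop n ρ) ∧ ∑ x : Fin n, Kop n ρ univ x = 0)) ∧
    (∀ κ : Finset (Fin n) → Fin n → ℝ,
      (IsFlow n κ ∧ ∑ x : Fin n, κ univ x = 0) ↔
        ∃ ξ : Finset (Fin n) → Fin n → ℝ,
          ∀ D : Finset (Fin n), ∀ x ∈ D, Kop n (Bop n ξ) D x = κ D x) :=
  ⟨sum_eq_zero_iff_isFlow_kop, isFlow_and_total_iff_exists_kop_bop⟩

/-- `ρ` sums to zero on every nonempty `D` iff `Kρ` is a flow with total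
flow 0; consequently the image of `KB` is exactly the space of flows with
total flow 0 (on the meaningful coordinates `x ∈ D`). -/
theorem sum_zero_iff_flow_zero_and_image_KB (n : ℕ) (hn : 0 < n) :
    (∀ ρ : Finset (Fin n) → Fin n → ℝ,
      (∀ D : Finset (Fin n), D.Nonempty → ∑ x ∈ D, ρ D x = 0) ↔
        (IsFlow n (Kop n ρ) ∧ ∑ x : Fin n, Kop n ρ univ x = 0)) ∧
    (∀ κ : Finset (Fin n) → Fin n → ℝ,
      (IsFlow n κ ∧ ∑ x : Fin n, κ univ x = 0) ↔
        ∃ ξ : Finset (Fin n) → Fin n → ℝ,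
          ∀ D : Finset (Fin n), ∀ x ∈ D, Kop n (Bop n ξ) D x = κ D x) :=
  sum_zero_iff_flow_zero_and_image_KB_general n
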